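/- arXiv:1804.09341 — 2 statements merged into one kernel-verified Lean document; each statement's English description precedes it below -/
import Mathlib

section
/- Let A be an MDP and H a closed convex set of probability distributions. If x, y ∈ H admit H-safe strategies (infinite sequences of one-step strategies keeping the distribution in H forever), then every convex combination z = λx + (1-λ)y with λ ∈ [0,1] also admits an H-safe strategy. -/
open scoped BigOperators

/-- An `n × n` real matrix is row-stochastic if all entries are nonnegative
and each row sums to `1`. -/
def RowStochastic {n : ℕ} (M : Matrix (Fin n) (Fin n) ℝ) : Prop :=
  (∀ i j, 0 ≤ M i j) ∧ ∀ i, ∑ j, M i j = 1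

/-- A probability distribution on `n` states. -/
def IsDist {n : ℕ} (Δ : Fin n → ℝ) : Prop :=
  (∀ i, 0 ≤ Δ i) ∧ ∑ i, Δ i = 1

/-- A one-step MDP strategy: each state gets a probability distribution over actions. -/
def IsMDPStrategy {n : ℕ} {A : Type} [Fintype A] (τ : A → Fin n → ℝ) : Prop :=
  (∀ α i, 0 ≤ τ α i) ∧ ∀ i, ∑ α, τ α i = 1

/-- The stochastic matrix induced by a one-step MDP strategy. -/
noncomputable def stratMatrix {n : ℕ} {A : Type} [Fintype A]
    (M : A → Matrix (Fin n) (Fin n) ℝ) (τ : A → Fin n → ℝ) :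
    Matrix (Fin n) (Fin n) ℝ :=
  fun i j => ∑ α, τ α i * M α i j

/-- The distribution reached after `m` steps applying the sequence of one-step
strategies `σ` from `Δ`. -/
noncomputable def iterDist {n : ℕ} {A : Type} [Fintype A]
    (M : A → Matrix (Fin n) (Fin n) ℝ) (σ : ℕ → A → Fin n → ℝ)
    (Δ : Fin n → ℝ) : ℕ → Fin n → ℝ
  | 0 => Δ
  | m + 1 => Matrix.vecMul (iterDist M σ Δ m) (stratMatrix M (σ m))

/-- `Δ` admits an `H`-safe strategy. -/
def HSafe {n : ℕ} {A : Type} [Fintype A]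
    (M : A → Matrix (Fin n) (Fin n) ℝ) (H : Set (Fin n → ℝ)) (Δ : Fin n → ℝ) : Prop :=
  ∃ σ : ℕ → A → Fin n → ℝ,
    (∀ m, IsMDPStrategy (σ m)) ∧ ∀ m, iterDist M σ Δ m ∈ H

/-- The winning region: distributions of `H` admitting an `H`-safe strategy. -/
def Hwin {n : ℕ} {A : Type} [Fintype A]
    (M : A → Matrix (Fin n) (Fin n) ℝ) (H : Set (Fin n → ℝ)) : Set (Fin n → ℝ) :=
  {Δ | Δ ∈ H ∧ HSafe M H Δ}

/-- A convex polytope in H-representation: a finite intersection of half-spaces. -/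
def IsPolytope {n : ℕ} (H : Set (Fin n → ℝ)) : Prop :=
  ∃ (k : ℕ) (a : Fin k → Fin n → ℝ) (b : Fin k → ℝ),
    H = {x | ∀ j, ∑ i, a j i * x i ≤ b j}

/-- A one-step PFA strategy: a probability distribution over actions. -/
def IsPFAStrategy {A : Type} [Fintype A] (τ : A → ℝ) : Prop :=
  (∀ α, 0 ≤ τ α) ∧ ∑ α, τ α = 1

/-- The stochastic matrix induced by a one-step PFA strategy. -/
noncomputable def pfaMatrix {n : ℕ} {A : Type} [Fintype A]
    (M : A → Matrix (Fin n) (Fin n) ℝ) (τ : A → ℝ) : Matrix (Fin n) (Fin n) ℝ :=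
  ∑ α, τ α • M α

/-! Mix the two safe strategies state by state, weighting the action distributions of the two
runs by the mass each run places on the state. The run from `l • x + (1 - l) • y` under the
mixture is then, at every step, the same convex combination of the two runs, which lies in `H`
by convexity. -/

open Finset

section Mixing

variable {n : ℕ} {A : Type}

/-- At a state carrying no mass the choice is irrelevant; `τ` is taken there. -/
noncomputable def mixStrategy (p q : Fin n → ℝ) (τ τ' : A → Fin n → ℝ) : A → Fin n → ℝ :=
  fun α i => if p i + q i = 0 then τ α i else (p i * τ α i + q i * τ' α i) / (p i + q i)

lemma mul_mixStrategy {p q : Fin n → ℝ} {i : Fin n} (hp : 0 ≤ p i) (hq : 0 ≤ q i)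
    (τ τ' : A → Fin n → ℝ) (α : A) :
    (p i + q i) * mixStrategy p q τ τ' α i = p i * τ α i + q i * τ' α i := by
  unfold mixStrategy
  split_ifs with h
  · obtain ⟨hp0, hq0⟩ : p i = 0 ∧ q i = 0 := ⟨by linarith, by linarith⟩
    simp [hp0, hq0]
  · field_simp

lemma IsMDPStrategy.mixStrategy [Fintype A] {τ τ' : A → Fin n → ℝ} (hτ : IsMDPStrategy τ)
    (hτ' : IsMDPStrategy τ') {p q : Fin n → ℝ} (hp : ∀ i, 0 ≤ p i) (hq : ∀ i, 0 ≤ q i) :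
    IsMDPStrategy (mixStrategy p q τ τ') := by
  refine ⟨fun α i => ?_, fun i => ?_⟩
  · unfold _root_.mixStrategy
    split_ifs
    · exact hτ.1 α i
    · exact div_nonneg (add_nonneg (mul_nonneg (hp i) (hτ.1 α i))
        (mul_nonneg (hq i) (hτ'.1 α i))) (add_nonneg (hp i) (hq i))
  · by_cases h : p i + q i = 0
    · simp only [_root_.mixStrategy, h, if_true, hτ.2 i]
    · refine mul_left_cancel₀ h ?_
      rw [mul_sum, mul_one]
      simp only [mul_mixStrategy (hp i) (hq i), sum_add_distrib, ← mul_sum, hτ.2 i, hτ'.2 i,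
        mul_one]

lemma vecMul_stratMatrix_mixStrategy [Fintype A] (M : A → Matrix (Fin n) (Fin n) ℝ) (τ τ' : A → Fin n → ℝ)
    {p q : Fin n → ℝ} (hp : ∀ i, 0 ≤ p i) (hq : ∀ i, 0 ≤ q i) :
    Matrix.vecMul (p + q) (stratMatrix M (mixStrategy p q τ τ')) =
      Matrix.vecMul p (stratMatrix M τ) + Matrix.vecMul q (stratMatrix M τ') := by
  ext j
  simp only [Matrix.vecMul, dotProduct, stratMatrix, Pi.add_apply, mul_sum, ← sum_add_distrib]
  refine sum_congr rfl fun i _ => sum_congr rfl fun α _ => ?_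
  rw [← mul_assoc, mul_mixStrategy (hp i) (hq i)]
  ring

end Mixing

section Runs

variable {n : ℕ} {A : Type} [Fintype A] (M : A → Matrix (Fin n) (Fin n) ℝ)

lemma iterDist_smul (σ : ℕ → A → Fin n → ℝ) (c : ℝ) (Δ : Fin n → ℝ) (m : ℕ) :
    iterDist M σ (c • Δ) m = c • iterDist M σ Δ m := by
  induction m with
  | zero => rfl
  | succ m ih => rw [iterDist, iterDist, ih, Matrix.smul_vecMul]

lemma iterDist_add_mixStrategy (σ σ' : ℕ → A → Fin n → ℝ) (Δ Δ' : Fin n → ℝ)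
    (hΔ : ∀ m i, 0 ≤ iterDist M σ Δ m i) (hΔ' : ∀ m i, 0 ≤ iterDist M σ' Δ' m i) (m : ℕ) :
    iterDist M (fun k => mixStrategy (iterDist M σ Δ k) (iterDist M σ' Δ' k) (σ k) (σ' k))
        (Δ + Δ') m = iterDist M σ Δ m + iterDist M σ' Δ' m := by
  induction m with
  | zero => rfl
  | succ m ih =>
    rw [iterDist, ih, vecMul_stratMatrix_mixStrategy M _ _ (hΔ m) (hΔ' m)]
    rfl

end Runs

theorem stmt6_general {n : ℕ} {A : Type} [Fintype A]
    (M : A → Matrix (Fin n) (Fin n) ℝ)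
    (H : Set (Fin n → ℝ)) (hconv : Convex ℝ H)
    (hHd : ∀ Δ ∈ H, IsDist Δ)
    (x y : Fin n → ℝ)
    (hsx : HSafe M H x) (hsy : HSafe M H y)
    (l : ℝ) (hl : l ∈ Set.Icc (0:ℝ) 1) :
    HSafe M H (l • x + (1 - l) • y) := by
  obtain ⟨hl0, hl1⟩ := hl
  have hl1' : 0 ≤ 1 - l := sub_nonneg.2 hl1
  obtain ⟨σ, hσ, hσH⟩ := hsx
  obtain ⟨σ', hσ', hσ'H⟩ := hsy
  have hnn : ∀ m i, 0 ≤ iterDist M σ (l • x) m i := fun m i => by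
    rw [iterDist_smul]
    exact mul_nonneg hl0 ((hHd _ (hσH m)).1 i)
  have hnn' : ∀ m i, 0 ≤ iterDist M σ' ((1 - l) • y) m i := fun m i => by
    rw [iterDist_smul]
    exact mul_nonneg hl1' ((hHd _ (hσ'H m)).1 i)
  refine ⟨fun m => mixStrategy (iterDist M σ (l • x) m) (iterDist M σ' ((1 - l) • y) m)
      (σ m) (σ' m), fun m => (hσ m).mixStrategy (hσ' m) (hnn m) (hnn' m), fun m => ?_⟩
  rw [iterDist_add_mixStrategy M σ σ' _ _ hnn hnn', iterDist_smul, iterDist_smul]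
  exact hconv (hσH m) (hσ'H m) hl0 hl1' (add_sub_cancel l 1)

theorem stmt6 {n : ℕ} {A : Type} [Fintype A]
    (M : A → Matrix (Fin n) (Fin n) ℝ) (hM : ∀ α, RowStochastic (M α))
    (H : Set (Fin n → ℝ)) (hclosed : IsClosed H) (hconv : Convex ℝ H)
    (hHd : ∀ Δ ∈ H, IsDist Δ)
    (x y : Fin n → ℝ) (hx : x ∈ H) (hy : y ∈ H)
    (hsx : HSafe M H x) (hsy : HSafe M H y)
    (l : ℝ) (hl : l ∈ Set.Icc (0:ℝ) 1) :
    HSafe M H (l • x + (1 - l) • y) :=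
  stmt6_general M H hconv hHd x y hsx hsy l hl
end

section
/- Let A be an MDP and H a closed convex polytope of distributions. Then H_win ≠ ∅ if and only if there exists a distribution Δ ∈ H and a one-step MDP strategy τ with Δ·M_τ = Δ. -/
open scoped BigOperators

/-!
If `Δ ∈ H` and `Δ·M_τ = Δ`, playing `τ` forever is `H`-safe. Conversely, let `Δ₀, Δ₁, …` be an
`H`-safe play under strategies `σₖ`. The Cesàro average `Cₘ = (Δ₀ + ⋯ + Δₘ)/(m+1)` lies in the
convex set `H`, and mixing the `σₖ` state by state with weights `Δₖ(i)` gives a strategy `τₘ` with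
`Cₘ·M_{τₘ} - Cₘ = (Δ_{m+1} - Δ₀)/(m+1)`, of norm at most `2/(m+1)`. Hence the continuous residual
`‖Δ·M_τ - Δ‖` has infimum `0` on the compact set `H × {strategies}`, and a minimiser is a fixed
pair. This averaging argument replaces the appeal to Kakutani's theorem.
-/

open Finset Matrix

section Distributions

variable {n : ℕ} {A : Type} [Fintype A]

lemma IsDist.le_one {Δ : Fin n → ℝ} (h : IsDist Δ) (i : Fin n) : Δ i ≤ 1 :=
  h.2 ▸ single_le_sum (fun j _ => h.1 j) (mem_univ i)

lemma IsDist.norm_le_one {Δ : Fin n → ℝ} (h : IsDist Δ) : ‖Δ‖ ≤ 1 :=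
  (pi_norm_le_iff_of_nonneg zero_le_one).2 fun i => by
    rw [Real.norm_of_nonneg (h.1 i)]
    exact h.le_one i

lemma IsMDPStrategy.le_one {τ : A → Fin n → ℝ} (h : IsMDPStrategy τ) (α : A) (i : Fin n) :
    τ α i ≤ 1 :=
  h.2 i ▸ single_le_sum (fun β _ => h.1 β i) (mem_univ α)

lemma isCompact_setOf_isMDPStrategy : IsCompact {τ : A → Fin n → ℝ | IsMDPStrategy τ} := by
  have hclosed : IsClosed {τ : A → Fin n → ℝ | IsMDPStrategy τ} := by
    simp only [IsMDPStrategy, Set.ofPred_and, Set.ofPred_forall]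
    exact (isClosed_iInter fun α => isClosed_iInter fun i =>
      isClosed_le continuous_const (by fun_prop)).inter
      (isClosed_iInter fun i => isClosed_eq (by fun_prop) continuous_const)
  exact isCompact_Icc.of_isClosed_subset hclosed fun τ hτ => ⟨hτ.1, hτ.le_one⟩

lemma IsPolytope.isClosed {H : Set (Fin n → ℝ)} (h : IsPolytope H) : IsClosed H := by
  obtain ⟨k, a, b, rfl⟩ := h
  simp only [Set.ofPred_forall]
  exact isClosed_iInter fun j => isClosed_le (by fun_prop) continuous_const

lemma IsPolytope.convex {H : Set (Fin n → ℝ)} (h : IsPolytope H) : Convex ℝ H := by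
  obtain ⟨k, a, b, rfl⟩ := h
  simp only [Set.ofPred_forall]
  exact convex_iInter fun j => convex_halfSpace_le
    ⟨fun x y => by simp [mul_add, sum_add_distrib], fun c x => by simp [mul_sum, mul_left_comm]⟩ _

lemma IsPolytope.isCompact {H : Set (Fin n → ℝ)} (h : IsPolytope H) (hHd : ∀ Δ ∈ H, IsDist Δ) :
    IsCompact H :=
  isCompact_Icc.of_isClosed_subset h.isClosed fun Δ hΔ => ⟨(hHd Δ hΔ).1, (hHd Δ hΔ).le_one⟩

end Distributions

section StratMatrix

variable {n : ℕ} {A : Type} [Fintype A] (M : A → Matrix (Fin n) (Fin n) ℝ)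

lemma vecMul_stratMatrix_apply (Δ : Fin n → ℝ) (τ : A → Fin n → ℝ) (j : Fin n) :
    (Δ ᵥ* stratMatrix M τ) j = ∑ i, ∑ α, Δ i * τ α i * M α i j := by
  simp [vecMul, dotProduct, stratMatrix, mul_sum, mul_assoc]

lemma continuous_vecMul_stratMatrix :
    Continuous fun p : (Fin n → ℝ) × (A → Fin n → ℝ) => p.1 ᵥ* stratMatrix M p.2 :=
  continuous_pi fun j => by
    simp only [vecMul_stratMatrix_apply]
    fun_prop

lemma iterDist_succ (σ : ℕ → A → Fin n → ℝ) (Δ : Fin n → ℝ) (m : ℕ) :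
    iterDist M σ Δ (m + 1) = iterDist M σ Δ m ᵥ* stratMatrix M (σ m) :=
  rfl

lemma iterDist_const_of_vecMul_eq {Δ : Fin n → ℝ} {τ : A → Fin n → ℝ}
    (h : Δ ᵥ* stratMatrix M τ = Δ) (m : ℕ) : iterDist M (fun _ => τ) Δ m = Δ := by
  induction m with
  | zero => rfl
  | succ m ih => rw [iterDist_succ, ih, h]

end StratMatrix

section Mixing

variable {n : ℕ} {A ι : Type}

noncomputable def mixedStrategy (s : Finset ι) (D : ι → Fin n → ℝ) (σ : ι → A → Fin n → ℝ)
    (τ₀ : A → Fin n → ℝ) : A → Fin n → ℝ :=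
  fun α i => if ∑ k ∈ s, D k i = 0 then τ₀ α i else (∑ k ∈ s, D k i * σ k α i) / ∑ k ∈ s, D k i

variable {s : Finset ι} {D : ι → Fin n → ℝ} {σ : ι → A → Fin n → ℝ} {τ₀ : A → Fin n → ℝ}

lemma sum_mul_mixedStrategy (hD : ∀ k ∈ s, 0 ≤ D k) (α : A) (i : Fin n) :
    (∑ k ∈ s, D k i) * mixedStrategy s D σ τ₀ α i = ∑ k ∈ s, D k i * σ k α i := by
  by_cases h : ∑ k ∈ s, D k i = 0
  · have hzero := (sum_eq_zero_iff_of_nonneg fun k hk => hD k hk i).1 h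
    rw [h, zero_mul]
    exact (sum_eq_zero fun k hk => by rw [hzero k hk, zero_mul]).symm
  · simp [mixedStrategy, h, mul_div_cancel₀]

variable [Fintype A]

lemma isMDPStrategy_mixedStrategy (hD : ∀ k ∈ s, 0 ≤ D k)
    (hσ : ∀ k ∈ s, IsMDPStrategy (σ k)) (hτ₀ : IsMDPStrategy τ₀) :
    IsMDPStrategy (mixedStrategy s D σ τ₀) := by
  constructor
  · intro α i
    unfold mixedStrategy
    split_ifs
    · exact hτ₀.1 α i
    · exact div_nonneg (sum_nonneg fun k hk => mul_nonneg (hD k hk i) ((hσ k hk).1 α i))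
        (sum_nonneg fun k hk => hD k hk i)
  · intro i
    by_cases h : ∑ k ∈ s, D k i = 0
    · simp only [mixedStrategy, h, if_true]
      exact hτ₀.2 i
    · simp only [mixedStrategy, h, if_false, ← sum_div]
      rw [sum_comm, div_eq_one_iff_eq h]
      exact sum_congr rfl fun k hk => by rw [← mul_sum, (hσ k hk).2 i, mul_one]

/-- The step from `Δ` under `τ` depends only on the masses `Δ i * τ α i`, and mixing preserves
their sums over `k`. -/
lemma sum_vecMul_stratMatrix_mixedStrategy (M : A → Matrix (Fin n) (Fin n) ℝ)
    (hD : ∀ k ∈ s, 0 ≤ D k) :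
    (∑ k ∈ s, D k) ᵥ* stratMatrix M (mixedStrategy s D σ τ₀) =
      ∑ k ∈ s, D k ᵥ* stratMatrix M (σ k) := by
  ext j
  simp only [vecMul_stratMatrix_apply, Finset.sum_apply, sum_mul_mixedStrategy hD, sum_mul]
  exact (sum_congr rfl fun i _ => sum_comm).trans sum_comm

end Mixing

lemma HSafe.exists_norm_vecMul_stratMatrix_sub_le {n : ℕ} {A : Type} [Fintype A]
    {M : A → Matrix (Fin n) (Fin n) ℝ} {H : Set (Fin n → ℝ)} {Δ : Fin n → ℝ}
    (hsafe : HSafe M H Δ) (hconv : Convex ℝ H) (hHd : ∀ Δ ∈ H, IsDist Δ) (m : ℕ) :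
    ∃ C ∈ H, ∃ τ, IsMDPStrategy τ ∧ ‖C ᵥ* stratMatrix M τ - C‖ ≤ 2 / (m + 1) := by
  obtain ⟨σ, hσ, hD⟩ := hsafe
  set D := iterDist M σ Δ
  set S := ∑ k ∈ range (m + 1), D k
  have hDnonneg : ∀ k ∈ range (m + 1), 0 ≤ D k := fun k _ => (hHd _ (hD k)).1
  set τ := mixedStrategy (range (m + 1)) D σ (σ 0)
  have hτ : IsMDPStrategy τ :=
    isMDPStrategy_mixedStrategy hDnonneg (fun k _ => hσ k) (hσ 0)
  have hS : S ᵥ* stratMatrix M τ - S = D (m + 1) - D 0 := by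
    rw [sum_vecMul_stratMatrix_mixedStrategy M hDnonneg, ← sum_range_sub, sum_sub_distrib]
    rfl
  have hm : (0 : ℝ) < m + 1 := by positivity
  refine ⟨((m : ℝ) + 1)⁻¹ • S, ?_, τ, hτ, ?_⟩
  · rw [smul_sum]
    exact hconv.sum_mem (fun _ _ => by positivity) (by simp [hm.ne']) fun k _ => hD k
  · rw [smul_vecMul, ← smul_sub, hS, norm_smul, Real.norm_of_nonneg (by positivity),
      inv_mul_le_iff₀ hm, mul_div_cancel₀ _ hm.ne']
    calc ‖D (m + 1) - D 0‖ ≤ ‖D (m + 1)‖ + ‖D 0‖ := norm_sub_le _ _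
      _ ≤ 1 + 1 := add_le_add (hHd _ (hD _)).norm_le_one (hHd _ (hD _)).norm_le_one
      _ = 2 := by norm_num

lemma IsCompact.exists_eq_zero_of_forall_exists_norm_le {X E : Type*} [TopologicalSpace X]
    [NormedAddCommGroup E] {K : Set X} (hK : IsCompact K) {f : X → E} (hf : ContinuousOn f K)
    (hsmall : ∀ ε > 0, ∃ x ∈ K, ‖f x‖ ≤ ε) : ∃ x ∈ K, f x = 0 := by
  obtain ⟨y, hy, -⟩ := hsmall 1 one_pos
  obtain ⟨x, hx, hmin⟩ := hK.exists_isMinOn ⟨y, hy⟩ hf.norm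
  refine ⟨x, hx, norm_le_zero_iff.1 (le_of_forall_pos_le_add fun ε hε => ?_)⟩
  obtain ⟨z, hz, hfz⟩ := hsmall ε hε
  rw [zero_add]
  exact (hmin hz).trans hfz

theorem stmt10_general {n : ℕ} {A : Type} [Fintype A]
    (M : A → Matrix (Fin n) (Fin n) ℝ)
    (H : Set (Fin n → ℝ)) (hpoly : IsPolytope H) (hHd : ∀ Δ ∈ H, IsDist Δ) :
    (Hwin M H).Nonempty ↔
      ∃ Δ ∈ H, ∃ τ : A → Fin n → ℝ, IsMDPStrategy τ ∧
        Matrix.vecMul Δ (stratMatrix M τ) = Δ := by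
  constructor
  · rintro ⟨Δ, -, hsafe⟩
    have hsmall : ∀ ε > 0, ∃ p ∈ H ×ˢ {τ | IsMDPStrategy τ},
        ‖p.1 ᵥ* stratMatrix M p.2 - p.1‖ ≤ ε := by
      intro ε hε
      obtain ⟨m, hm⟩ := exists_nat_one_div_lt (half_pos hε)
      obtain ⟨C, hC, τ, hτ, hle⟩ := hsafe.exists_norm_vecMul_stratMatrix_sub_le hpoly.convex hHd m
      refine ⟨(C, τ), ⟨hC, hτ⟩, hle.trans ?_⟩
      rw [div_lt_iff₀ (by positivity)] at hm
      rw [div_le_iff₀ (by positivity)]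
      linarith
    obtain ⟨⟨Δ', τ⟩, ⟨hΔ', hτ⟩, hfix⟩ :=
      (hpoly.isCompact hHd).prod isCompact_setOf_isMDPStrategy
        |>.exists_eq_zero_of_forall_exists_norm_le
          ((continuous_vecMul_stratMatrix M).sub continuous_fst).continuousOn hsmall
    exact ⟨Δ', hΔ', τ, hτ, sub_eq_zero.1 hfix⟩
  · rintro ⟨Δ, hΔ, τ, hτ, hfix⟩
    exact ⟨Δ, hΔ, fun _ => τ, fun _ => hτ, fun m => by
      rw [iterDist_const_of_vecMul_eq M hfix]
      exact hΔ⟩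

theorem stmt10 {n : ℕ} {A : Type} [Fintype A]
    (M : A → Matrix (Fin n) (Fin n) ℝ) (hM : ∀ α, RowStochastic (M α))
    (H : Set (Fin n → ℝ)) (hpoly : IsPolytope H) (hHd : ∀ Δ ∈ H, IsDist Δ) :
    (Hwin M H).Nonempty ↔
      ∃ Δ ∈ H, ∃ τ : A → Fin n → ℝ, IsMDPStrategy τ ∧
        Matrix.vecMul Δ (stratMatrix M τ) = Δ :=
  stmt10_general M H hpoly hHd
end
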